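/- arXiv:2412.21168 — 5 statements merged into one kernel-verified Lean document; each statement's English description precedes it below -/
import Mathlib

section
/- Let $G$ be a $k$-regular graph, $\mathbf{m} \in \mathbb{N}_0^{n\times n}$ with all row sums equal to $k$, and suppose $v \in \mathbb{R}^n$ solves the finite algebraic system $0 = d(\mathbf{m} v - k v)_i + f(v_i)$ for all $i = 1,\dots,n$. If $\Gamma : V \to \{1,\dots,n\}$ is an $\mathbf{m}$-perfect coloring of $G$, then the function $u : V \to \mathbb{R}$ defined by $u_i = v_{\Gamma(i)}$ is a stationary solution of the graph reaction-diffusion equation, i.e., $0 = d\sum_{j \in N(i)}(u_j - u_i) + f(u_i)$ for every vertex $i \in V$. -/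
open SimpleGraph Finset

/-- If `v` solves the finite algebraic system associated to the matrix `m`
and `Γ` is an `m`-perfect coloring of a `k`-regular graph, then `u i = v (Γ i)` is a
stationary solution of the graph reaction-diffusion equation. -/
theorem perfect_coloring_gives_stationary_solution
    {V : Type*} [DecidableEq V] (G : SimpleGraph V) [G.LocallyFinite]
    (k n : ℕ) (hreg : G.IsRegularOfDegree k)
    (m : Matrix (Fin n) (Fin n) ℕ)
    (hrow : ∀ i : Fin n, ∑ j, m i j = k)
    (d : ℝ) (hd : 0 < d) (f : ℝ → ℝ)
    (v : Fin n → ℝ)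
    (hv : ∀ i : Fin n, 0 = d * ((∑ j, (m i j : ℝ) * v j) - k * v i) + f (v i))
    (Γ : V → Fin n)
    (hperf : ∀ w : V, ∀ j : Fin n,
      ((G.neighborFinset w).filter (fun z => Γ z = j)).card = m (Γ w) j)
    (u : V → ℝ) (hu : ∀ w : V, u w = v (Γ w)) :
    ∀ w : V, 0 = d * (∑ z ∈ G.neighborFinset w, (u z - u w)) + f (u w) := by
  intro w
  have hsum : ∑ z ∈ G.neighborFinset w, u z = ∑ j, (m (Γ w) j : ℝ) * v j := by
    have := Finset.sum_fiberwise_of_maps_to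
      (g := Γ) (f := u) (s := G.neighborFinset w) (t := (univ : Finset (Fin n)))
      (fun x _ => mem_univ _)
    rw [← this]
    refine Finset.sum_congr rfl fun j _ => ?_
    rw [← hperf w j]
    have : ∀ z ∈ (G.neighborFinset w).filter (fun z => Γ z = j), u z = v j := by
      intro z hz
      rw [hu z, (Finset.mem_filter.mp hz).2]
    rw [Finset.sum_congr rfl this, Finset.sum_const, nsmul_eq_mul]
  rw [Finset.sum_sub_distrib, Finset.sum_const, hsum, G.card_neighborFinset_eq_degree w, hreg w, nsmul_eq_mul, hu w]
  exact hv (Γ w)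
end

section
/- Let $G$ be a $k$-regular graph, $d > 0$, $f : \mathbb{R} \to \mathbb{R}$, and let $u : V \to \mathbb{R}$ be a stationary solution of the graph reaction-diffusion equation whose image is exactly $\{\alpha, \beta\}$ with $\alpha \neq \beta$. Then there exist nonnegative integers $m_{\alpha\alpha}, m_{\beta\beta} \le k$ such that every vertex $i$ with $u_i = \alpha$ has exactly $m_{\alpha\alpha}$ neighbors with value $\alpha$ (and $k - m_{\alpha\alpha}$ with value $\beta$), and every vertex $i$ with $u_i = \beta$ has exactly $m_{\beta\beta}$ neighbors with value $\beta$. Consequently, the coloring $\Gamma(i) = 1$ if $u_i = \alpha$ and $\Gamma(i) = 2$ if $u_i = \beta$ is $\mathbf{m}$-perfect with $\mathbf{m} = \begin{pmatrix} m_{\alpha\alpha} & k - m_{\alpha\alpha} \\ k - m_{\beta\beta} & m_{\beta\beta}\end{pmatrix}$. -/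
open SimpleGraph Finset

lemma fin2_cases (j : Fin 2) : j = 0 ∨ j = 1 := by
  fin_cases j <;> simp

/-- A two-valued stationary solution of a graph reaction-diffusion equation
on a `k`-regular graph induces a perfect two-coloring. -/
theorem two_valued_stationary_solution_is_perfect
    {V : Type*} [DecidableEq V] (G : SimpleGraph V) [G.LocallyFinite]
    (k : ℕ) (hreg : G.IsRegularOfDegree k)
    (d : ℝ) (hd : 0 < d) (f : ℝ → ℝ)
    (u : V → ℝ)
    (hstat : ∀ w : V, 0 = d * (∑ z ∈ G.neighborFinset w, (u z - u w)) + f (u w))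
    (α β : ℝ) (hαβ : α ≠ β)
    (him : ∀ w : V, u w = α ∨ u w = β)
    (hα : ∃ w : V, u w = α) (hβ : ∃ w : V, u w = β) :
    ∃ mαα mββ : ℕ, mαα ≤ k ∧ mββ ≤ k ∧
      (∀ w : V, u w = α →
        ((G.neighborFinset w).filter (fun z => u z = α)).card = mαα ∧
        ((G.neighborFinset w).filter (fun z => u z = β)).card = k - mαα) ∧
      (∀ w : V, u w = β →
        ((G.neighborFinset w).filter (fun z => u z = β)).card = mββ) ∧
      (∀ w : V, ∀ j : Fin 2,
        ((G.neighborFinset w).filter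
            (fun z => (if u z = α then (0 : Fin 2) else 1) = j)).card =
          (!![mαα, k - mαα; k - mββ, mββ] : Matrix (Fin 2) (Fin 2) ℕ)
            (if u w = α then (0 : Fin 2) else 1) j) := by
  classical
  obtain ⟨w0, hw0⟩ := hα
  obtain ⟨w1, hw1⟩ := hβ
  set cA : V → ℕ := fun w => ((G.neighborFinset w).filter (fun z => u z = α)).card with hcA
  set cB : V → ℕ := fun w => ((G.neighborFinset w).filter (fun z => u z = β)).card with hcB
  have hsum : ∀ w : V, cA w + cB w = k := by
    intro w
    have hfe : (G.neighborFinset w).filter (fun z => u z = β) =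
        (G.neighborFinset w).filter (fun z => ¬ u z = α) := by
      apply Finset.filter_congr
      intro z _
      rcases him z with h | h <;> simp [h, hαβ, Ne.symm hαβ]
    have := Finset.card_filter_add_card_filter_not
      (s := G.neighborFinset w) (p := fun z => u z = α)
    simp only [hcA, hcB, hfe]
    rw [this]
    exact hreg w
  -- the key sum computation at a vertex with value α
  have hsumα : ∀ w : V, u w = α →
      (∑ z ∈ G.neighborFinset w, (u z - u w)) = (cB w : ℝ) * (β - α) := by
    intro w hw
    have : ∀ z ∈ G.neighborFinset w, u z - u w = if u z = β then β - α else 0 := by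
      intro z _
      rcases him z with h | h <;> simp [h, hw, hαβ, Ne.symm hαβ]
    rw [Finset.sum_congr rfl this, ← Finset.sum_filter, Finset.sum_const, nsmul_eq_mul]
  have hsumβ : ∀ w : V, u w = β →
      (∑ z ∈ G.neighborFinset w, (u z - u w)) = (cA w : ℝ) * (α - β) := by
    intro w hw
    have : ∀ z ∈ G.neighborFinset w, u z - u w = if u z = α then α - β else 0 := by
      intro z _
      rcases him z with h | h <;> simp [h, hw, hαβ, Ne.symm hαβ]
    rw [Finset.sum_congr rfl this, ← Finset.sum_filter, Finset.sum_const, nsmul_eq_mul]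
  have hconstB : ∀ w : V, u w = α → cB w = cB w0 := by
    intro w hw
    have h1 := hstat w
    have h2 := hstat w0
    rw [hsumα w hw, hw] at h1
    rw [hsumα w0 hw0, hw0] at h2
    have : d * ((cB w : ℝ) * (β - α)) = d * ((cB w0 : ℝ) * (β - α)) := by linarith
    have hd' : d ≠ 0 := ne_of_gt hd
    have hba : β - α ≠ 0 := sub_ne_zero.mpr (Ne.symm hαβ)
    have := mul_right_cancel₀ hba (mul_left_cancel₀ hd' this)
    exact_mod_cast this
  have hconstA : ∀ w : V, u w = β → cA w = cA w1 := by
    intro w hw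
    have h1 := hstat w
    have h2 := hstat w1
    rw [hsumβ w hw, hw] at h1
    rw [hsumβ w1 hw1, hw1] at h2
    have : d * ((cA w : ℝ) * (α - β)) = d * ((cA w1 : ℝ) * (α - β)) := by linarith
    have hd' : d ≠ 0 := ne_of_gt hd
    have hba : α - β ≠ 0 := sub_ne_zero.mpr hαβ
    have := mul_right_cancel₀ hba (mul_left_cancel₀ hd' this)
    exact_mod_cast this
  refine ⟨cA w0, cB w1, ?_, ?_, ?_, ?_, ?_⟩
  · have := hsum w0; omega
  · have := hsum w1; omega
  · intro w hw
    have hB := hconstB w hw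
    have h1 := hsum w
    have h2 := hsum w0
    constructor <;> [skip; skip] <;> simp only [hcA, hcB] at * <;> omega
  · intro w hw
    have hA := hconstA w hw
    have h1 := hsum w
    have h2 := hsum w1
    simp only [hcA, hcB] at *; omega
  · intro w j
    have hAcount : ∀ w' : V, (G.neighborFinset w').filter
        (fun z => (if u z = α then (0 : Fin 2) else 1) = 0) =
        (G.neighborFinset w').filter (fun z => u z = α) := by
      intro w'
      apply Finset.filter_congr
      intro z _
      by_cases h : u z = α <;> simp [h]
    have hBcount : ∀ w' : V, (G.neighborFinset w').filter
        (fun z => (if u z = α then (0 : Fin 2) else 1) = 1) =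
        (G.neighborFinset w').filter (fun z => u z = β) := by
      intro w'
      apply Finset.filter_congr
      intro z _
      rcases him z with h | h <;> simp [h, hαβ, Ne.symm hαβ]
    rcases him w with hw | hw
    · have hB := hconstB w hw
      have h1 := hsum w
      have h2 := hsum w0
      rcases fin2_cases j with rfl | rfl
      · rw [hAcount]
        simp [hw, Matrix.cons_val_zero]
        simp only [hcA, hcB] at *; omega
      · rw [hBcount]
        simp [hw, Matrix.cons_val_one]
        simp only [hcA, hcB] at *; omega
    · have hA := hconstA w hw
      have h1 := hsum w
      have h2 := hsum w1
      have hwne : ¬ u w = α := by rw [hw]; exact Ne.symm hαβ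
      rcases fin2_cases j with rfl | rfl
      · rw [hAcount]
        simp [hwne, Matrix.cons_val_zero, Matrix.cons_val_one]
        simp only [hcA, hcB] at *; omega
      · rw [hBcount]
        simp [hwne, Matrix.cons_val_zero, Matrix.cons_val_one]
        simp only [hcA, hcB] at *; omega
end

section
/- Let $G$ be a $k$-regular graph, let $\Gamma_1$ with color set $C_1$ ($|C_1| = \ell$) be a merger of $\Gamma_2$ with color set $C_2$ ($|C_2| = n$, $\ell < n$) via surjection $\phi : C_2 \to C_1$, where $\Gamma_1$ is $\mathbf{m}_1$-perfect and $\Gamma_2$ is $\mathbf{m}_2$-perfect with the matrices related by $(\mathbf{m}_1)_{ij} = \sum_{s \in \phi^{-1}(j)}(\mathbf{m}_2)_{i's}$ for any $i' \in \phi^{-1}(i)$. If $v_1 \in \mathbb{R}^{\ell}$ solves $0 = d(\mathbf{m}_1 v_1 - k v_1) + F(v_1)$ (where $F$ applies $f$ componentwise), then $v_2 \in \mathbb{R}^n$ defined by $(v_2)_i = (v_1)_{\phi(i)}$ solves $0 = d(\mathbf{m}_2 v_2 - k v_2) + F(v_2)$. -/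
open SimpleGraph Finset

/-- If the merger coloring `Γ₁` (with matrix `m₁`) of the perfect coloring
`Γ₂` (with matrix `m₂`) satisfies the merger relation of the matrices, then every
solution `v₁` of the finite system for `m₁` lifts along `φ` to a solution
`v₂ = v₁ ∘ φ` of the finite system for `m₂`. -/
theorem merger_solution_lifts
    {V : Type*} [DecidableEq V] (G : SimpleGraph V) [G.LocallyFinite]
    (k ℓ n : ℕ) (hln : ℓ < n) (hreg : G.IsRegularOfDegree k)
    (m₁ : Matrix (Fin ℓ) (Fin ℓ) ℕ) (m₂ : Matrix (Fin n) (Fin n) ℕ)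
    (Γ₁ : V → Fin ℓ) (Γ₂ : V → Fin n)
    (φ : Fin n → Fin ℓ) (hφ : Function.Surjective φ)
    (hmerge : ∀ w : V, Γ₁ w = φ (Γ₂ w))
    (hperf₁ : ∀ w : V, ∀ j : Fin ℓ,
      ((G.neighborFinset w).filter (fun z => Γ₁ z = j)).card = m₁ (Γ₁ w) j)
    (hperf₂ : ∀ w : V, ∀ j : Fin n,
      ((G.neighborFinset w).filter (fun z => Γ₂ z = j)).card = m₂ (Γ₂ w) j)
    -- the merger relation between the two matrices
    (hrel : ∀ (i' : Fin n) (j : Fin ℓ),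
      m₁ (φ i') j = ∑ s ∈ Finset.univ.filter (fun s => φ s = j), m₂ i' s)
    (d : ℝ) (hd : 0 < d) (f : ℝ → ℝ)
    (v₁ : Fin ℓ → ℝ)
    (hv₁ : ∀ i : Fin ℓ,
      0 = d * ((∑ j, (m₁ i j : ℝ) * v₁ j) - k * v₁ i) + f (v₁ i))
    (v₂ : Fin n → ℝ) (hv₂def : ∀ i : Fin n, v₂ i = v₁ (φ i)) :
    ∀ i : Fin n, 0 = d * ((∑ j, (m₂ i j : ℝ) * v₂ j) - k * v₂ i) + f (v₂ i) := by
  intro i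
  have hsum : (∑ j, (m₂ i j : ℝ) * v₂ j) = ∑ c, (m₁ (φ i) c : ℝ) * v₁ c := by
    rw [← Finset.sum_fiberwise (s := Finset.univ) (g := φ)
      (f := fun j => (m₂ i j : ℝ) * v₂ j)]
    refine Finset.sum_congr rfl fun c _ => ?_
    rw [hrel i c]
    push_cast
    rw [Finset.sum_mul]
    refine Finset.sum_congr rfl fun s hs => ?_
    simp only [Finset.mem_filter] at hs
    rw [hv₂def, hs.2]
  rw [hsum, hv₂def]
  exact hv₁ (φ i)
end

section
/- Let $f(u) = u(1-u)(u - 1/2)$ and $0 < d < 1/16$. Then there exists a solution $(\tilde{v}_1, \tilde{v}_2)$ of the system $0 = d(2v_2 - 2v_1) + f(v_1)$, $0 = d(2v_1 - 2v_2) + f(v_2)$ with $\tilde{v}_1 \in (0, 1/2)$ and $\tilde{v}_2 \in (1/2, 1)$. -/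
/-- For the bistable nonlinearity `f u = u(1-u)(u-1/2)` and diffusion
`0 < d < 1/16`, the finite system of the alternating coloring of the path admits a
heterogeneous solution `(ṽ₁, ṽ₂)` with `ṽ₁ ∈ (0, 1/2)` and `ṽ₂ ∈ (1/2, 1)`. -/
theorem heterogeneous_solution_exists
    (d : ℝ) (hd0 : 0 < d) (hd : d < 1 / 16)
    (f : ℝ → ℝ) (hf : ∀ s : ℝ, f s = s * (1 - s) * (s - 1 / 2)) :
    ∃ v₁ v₂ : ℝ, v₁ ∈ Set.Ioo (0 : ℝ) (1 / 2) ∧ v₂ ∈ Set.Ioo (1 / 2 : ℝ) 1 ∧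
      0 = d * (2 * v₂ - 2 * v₁) + f v₁ ∧
      0 = d * (2 * v₁ - 2 * v₂) + f v₂ := by
  have h14 : 0 < 1 / 4 - 4 * d := by linarith
  set t : ℝ := Real.sqrt ((1 / 4 - 4 * d) / 2) with htdef
  have ht2 : t ^ 2 = (1 / 4 - 4 * d) / 2 := Real.sq_sqrt (by linarith)
  have ht0 : 0 < t := Real.sqrt_pos.mpr (by linarith)
  have htlt : t < 1 / 2 := by nlinarith
  set a : ℝ := 1 / 2 - t with hadef
  have ha0 : (0 : ℝ) < a := by simp [hadef]; linarith
  have ha : a < 1 / 2 := by simp [hadef]; linarith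
  set g : ℝ → ℝ := fun v => d * (2 - 4 * v) + v * (1 - v) * (v - 1 / 2) with hgdef
  have hcont : ContinuousOn g (Set.Icc 0 a) := by
    apply Continuous.continuousOn
    fun_prop
  have hg0 : g 0 = 2 * d := by simp [hgdef]; ring
  have hga : g a < 0 := by
    have : g a = -(t * ((1 / 4 - 4 * d) / 2)) := by
      simp only [hgdef, hadef]; nlinarith [ht2]
    rw [this]
    have : 0 < t * ((1 / 4 - 4 * d) / 2) := mul_pos ht0 (by linarith)
    linarith
  have h0mem : (0 : ℝ) ∈ Set.Ioo (g a) (g 0) := by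
    constructor
    · exact hga
    · rw [hg0]; linarith
  obtain ⟨v, hv, hgv⟩ := intermediate_value_Ioo' (le_of_lt ha0) hcont h0mem
  obtain ⟨hv1, hv2⟩ := hv
  have hv2' : v < 1 / 2 := by rw [hadef] at hv2; linarith
  refine ⟨v, 1 - v, ⟨hv1, by linarith⟩, ⟨by linarith, by linarith⟩, ?_, ?_⟩
  · rw [hf]
    have : g v = 0 := hgv
    simp only [hgdef] at this
    linarith [this]
  · rw [hf]
    have : g v = 0 := hgv
    simp only [hgdef] at this
    nlinarith [this]
end

section
/- Every $\mathbf{m}$-perfect coloring of the infinite path graph (2-regular graph on $\mathbb{Z}$) with a finite color set is periodic: there exists $\ell \in \mathbb{N}$, $\ell \geq 1$, such that $\Gamma(i) = \Gamma(i + \ell)$ for all $i \in \mathbb{Z}$. -/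
/-!
The colour of `i` determines the multiset of colours of its two neighbours, so the pair
`(Γ i, Γ (i + 1))` determines `(Γ (i + 1), Γ (i + 2))` and, symmetrically, `(Γ (i - 1), Γ i)`.
Two indices `p ≠ q` carrying the same pair exist by pigeonhole, and this two-sided determinism
propagates the agreement to `Γ (i + (q - p)) = Γ i` for all `i`.
-/

lemma Multiset.eq_iff_eq_of_pair_eq {α : Type*} {x y x' y' : α}
    (h : ({x, y} : Multiset α) = {x', y'}) : x = x' ↔ y = y' := by
  constructor
  · rintro rfl
    simpa using (Multiset.cons_inj_right x).1 h
  · rintro rfl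
    rw [Multiset.pair_comm, Multiset.pair_comm x'] at h
    simpa using (Multiset.cons_inj_right y).1 h

section TwoSidedDeterminism

variable {α : Type*} {f : ℤ → α}
  (hdet : ∀ a b, f a = f b → (f (a - 1) = f (b - 1) ↔ f (a + 1) = f (b + 1)))
include hdet

lemma periodic_of_eq_of_eq_add_one {p d : ℤ} (h₀ : f (p + d) = f p)
    (h₁ : f (p + 1 + d) = f (p + 1)) : Function.Periodic f d := by
  have key : ∀ k, f (k + d) = f k ∧ f (k + 1 + d) = f (k + 1) := fun k => by
    induction k using Int.inductionOn' (b := p) with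
    | zero => exact ⟨h₀, h₁⟩
    | succ k _ ih =>
      refine ⟨ih.2, ?_⟩
      have := (hdet (k + 1 + d) (k + 1) ih.2).1 (by simpa [add_sub_right_comm] using ih.1)
      simpa [add_right_comm] using this
    | pred k _ ih =>
      refine ⟨?_, by simpa using ih.1⟩
      have := (hdet (k + d) k ih.1).2 (by simpa [add_right_comm] using ih.2)
      simpa [sub_add_eq_add_sub] using this
  exact fun k => (key k).1

theorem exists_periodic_of_finite [Finite α] : ∃ ℓ : ℕ, 1 ≤ ℓ ∧ Function.Periodic f ℓ := by
  obtain ⟨p, q, hpq, hpair⟩ :=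
    Finite.exists_ne_map_eq_of_infinite (fun n : ℤ => (f n, f (n + 1)))
  simp only [Prod.mk.injEq] at hpair
  have hper : Function.Periodic f (q - p) :=
    periodic_of_eq_of_eq_add_one hdet (p := p) (by rw [add_sub_cancel]; exact hpair.1.symm)
      (by rw [show p + 1 + (q - p) = q + 1 by ring]; exact hpair.2.symm)
  refine ⟨(q - p).natAbs, by omega, ?_⟩
  rcases Int.natAbs_eq (q - p) with h | h
  · rwa [← h]
  · rw [h] at hper
    simpa using hper.neg

end TwoSidedDeterminism

section PerfectColoring

variable {C : Type*} [DecidableEq C] {m : Matrix C C ℕ} {Γ : ℤ → C}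
  (hperf : ∀ i : ℤ, ∀ j : C,
      ((({i - 1, i + 1} : Finset ℤ)).filter (fun w => Γ w = j)).card = m (Γ i) j)
include hperf

lemma count_neighbors_eq (i : ℤ) (j : C) :
    Multiset.count j {Γ (i - 1), Γ (i + 1)} = m (Γ i) j := by
  rw [← hperf, Finset.card_filter, Finset.sum_pair (by omega)]
  simp [Multiset.count_cons, Multiset.count_singleton, eq_comm, add_comm]

lemma neighbors_eq_of_eq {a b : ℤ} (h : Γ a = Γ b) :
    ({Γ (a - 1), Γ (a + 1)} : Multiset C) = {Γ (b - 1), Γ (b + 1)} :=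
  Multiset.ext.2 fun j => by rw [count_neighbors_eq hperf, count_neighbors_eq hperf, h]

end PerfectColoring

/-- Every perfect coloring of the infinite path graph (vertex set `ℤ`,
neighbors `i ± 1`) with a finite color set is periodic. -/
theorem perfect_coloring_of_path_is_periodic
    {C : Type*} [Fintype C] [DecidableEq C]
    (m : Matrix C C ℕ) (Γ : ℤ → C)
    (hperf : ∀ i : ℤ, ∀ j : C,
      ((({i - 1, i + 1} : Finset ℤ)).filter (fun w => Γ w = j)).card = m (Γ i) j) :
    ∃ ℓ : ℕ, 1 ≤ ℓ ∧ ∀ i : ℤ, Γ (i + ℓ) = Γ i :=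
  exists_periodic_of_finite fun _ _ h =>
    Multiset.eq_iff_eq_of_pair_eq (neighbors_eq_of_eq hperf h)
end
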